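/- Let P_k denote the normalized shifted Legendre polynomial of degree k on [0,1] and ξ₁ = 1/(2√3). Suppose Ā(τ,σ) = Σ_{i=0}^{N} Σ_{j=0}^{N} α_{(i,j)} P_i(τ) P_j(σ) with real coefficients α_{(i,j)}, and suppose Ā(τ,σ) − Ā(1−τ,1−σ) = τ − σ for all τ, σ ∈ [0,1]. Then α_{(0,1)} = −ξ₁/2, α_{(1,0)} = ξ₁/2, and α_{(i,j)} = 0 for every pair (i,j) with i + j odd and i + j > 1. -/

import Mathlib

/-!
Up to the factor `(-1)ᵏ √(2k+1)`, `P_k` is Mathlib's `shiftedLegendre k`, so it is a real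
polynomial of exact degree `k` with `P_k(1 - x) = (-1)ᵏ P_k(x)`. Hence
`Ā(τ,σ) - Ā(1-τ,1-σ)` is the double Legendre expansion with coefficients
`α_{ij} (1 - (-1)^{i+j})`, while `τ - σ = ξ₁ (P₁(τ) P₀(σ) - P₀(τ) P₁(σ))`.
Polynomials of distinct degrees are linearly independent and agree on the infinite set
`[0,1]` only if equal, so the products `P_i(τ) P_j(σ)` are independent on `[0,1]²`, and
comparing coefficients gives
`2 α_{ij} = 0` for odd `i + j > 1` and `2 α_{10} = ξ₁ = -2 α_{01}`.
-/

open Set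

noncomputable section

/-- The normalized shifted Legendre polynomial of degree `k` on `[0,1]`,
given by the Rodrigues formula `P_k(x) = (√(2k+1)/k!) dᵏ/dxᵏ [(x² - x)ᵏ]`. -/
def legP (k : ℕ) (x : ℝ) : ℝ :=
  (Real.sqrt (2 * (k : ℝ) + 1) / (Nat.factorial k : ℝ)) *
    iteratedDeriv k (fun y : ℝ => (y ^ 2 - y) ^ k) x

/-- `ξ₁ = 1/(2√3)`. -/
def xi1 : ℝ := 1 / (2 * Real.sqrt 3)

open Polynomial Finset

theorem iteratedDeriv_polynomial_eval {𝕜 : Type*} [NontriviallyNormedField 𝕜] (k : ℕ)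
    (p : 𝕜[X]) : iteratedDeriv k (fun y => p.eval y) = fun y => (derivative^[k] p).eval y := by
  induction k generalizing p with
  | zero => simp
  | succ k ih =>
    rw [iteratedDeriv_succ', Function.iterate_succ_apply, ← ih]
    congr 1
    exact funext fun _ => p.deriv

/- Mathlib's Rodrigues formula is for `xᵏ(1 - x)ᵏ = (-1)ᵏ (x² - x)ᵏ`, hence the sign. -/
def legPoly (k : ℕ) : ℝ[X] :=
  C ((-1) ^ k * √(2 * k + 1)) * (shiftedLegendre k).map (Int.castRingHom ℝ)

theorem degree_legPoly (k : ℕ) : (legPoly k).degree = k := by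
  rw [legPoly, degree_C_mul (by positivity), degree_map_eq_of_injective
    (RingHom.injective_int _), degree_shiftedLegendre]

theorem legP_eq_eval_legPoly (k : ℕ) (x : ℝ) : legP k x = (legPoly k).eval x := by
  have hbase : (X ^ 2 - X : ℝ[X]) ^ k
      = C ((-1) ^ k) * (X ^ k * (1 - X) ^ k : ℤ[X]).map (Int.castRingHom ℝ) := by
    simp only [Polynomial.map_mul, Polynomial.map_pow, map_X, Polynomial.map_sub,
      Polynomial.map_one, C_pow, C_neg, C_1]
    rw [show (X ^ 2 - X : ℝ[X]) = -1 * (X * (1 - X)) by ring, mul_pow, mul_pow]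
  have hrodrigues :=
    congrArg (Polynomial.map (Int.castRingHom ℝ)) (factorial_mul_shiftedLegendre_eq k)
  rw [Polynomial.map_mul, ← iterate_derivative_map] at hrodrigues
  simp only [Polynomial.map_natCast] at hrodrigues
  have hfun : (fun y : ℝ => (y ^ 2 - y) ^ k) = fun y => ((X ^ 2 - X : ℝ[X]) ^ k).eval y := by
    simp
  rw [legP, hfun, iteratedDeriv_polynomial_eval, hbase, iterate_derivative_C_mul, ← hrodrigues,
    legPoly]
  simp only [eval_mul, eval_C, eval_natCast]
  field_simp

theorem legP_one_sub (k : ℕ) (x : ℝ) : legP k (1 - x) = (-1) ^ k * legP k x := by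
  have hsymm := shiftedLegendre_eval_symm k x
  simp only [aeval_def, eval₂_eq_eval_map, algebraMap_int_eq] at hsymm
  have hx : legP k x = (-1) ^ k * legP k (1 - x) := by
    simp only [legP_eq_eval_legPoly, legPoly, eval_mul, eval_C, hsymm]
    ring
  rw [hx, ← mul_assoc, ← mul_pow, neg_one_mul, neg_neg, one_pow, one_mul]

theorem legP_zero (x : ℝ) : legP 0 x = 1 := by
  simp [legP]

theorem xi1_mul_legP_one (x : ℝ) : xi1 * legP 1 x = x - 1 / 2 := by
  have h3 : √3 ≠ 0 := by positivity
  norm_num [legP, xi1]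
  field_simp

theorem eq_zero_of_sum_C_mul_eq_zero_of_degree_eq {R : Type*} [Semiring R]
    [NoZeroDivisors R] {p : ℕ → R[X]} {s : Finset ℕ} (hp : ∀ i ∈ s, (p i).degree = i) {a : ℕ → R}
    (h : ∑ i ∈ s, C (a i) * p i = 0) : ∀ i ∈ s, a i = 0 := by
  have hdeg : ∀ i ∈ s, C (a i) * p i ≠ 0 → (C (a i) * p i).degree = i := by
    intro i hi hne
    rw [degree_C_mul (fun ha => hne (by simp [ha])), hp i hi]
  have hsup := degree_sum_eq_of_disjoint (fun i => C (a i) * p i) s (by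
    rintro i ⟨hi, hi0⟩ j ⟨hj, hj0⟩ hij
    simpa [Function.onFun, hdeg i hi hi0, hdeg j hj hj0] using hij)
  rw [h, degree_zero, eq_comm, Finset.sup_eq_bot_iff] at hsup
  intro i hi
  have h0 : C (a i) * p i = 0 := degree_eq_bot.1 (hsup i hi)
  have hpi : p i ≠ 0 := fun h' => by simpa [h'] using hp i hi
  simpa [hpi] using h0

theorem coeff_eq_of_sum_legP_eqOn {s : Set ℝ} (hs : s.Infinite) {t : Finset ℕ} {a b : ℕ → ℝ}
    (h : ∀ x ∈ s, ∑ i ∈ t, a i * legP i x = ∑ i ∈ t, b i * legP i x) :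
    ∀ i ∈ t, a i = b i := by
  have hpoly : ∑ i ∈ t, C (a i - b i) * legPoly i = 0 := by
    refine eq_zero_of_infinite_isRoot _ (hs.mono fun x hx => ?_)
    simp only [Set.mem_ofPred_eq, IsRoot, eval_finsetSum, eval_mul, eval_C,
      ← legP_eq_eval_legPoly, sub_mul, Finset.sum_sub_distrib, h x hx, sub_self]
  intro i hi
  exact sub_eq_zero.1
    (eq_zero_of_sum_C_mul_eq_zero_of_degree_eq (fun i _ => degree_legPoly i) hpoly i hi)

theorem coeff_eq_of_double_sum_legP_eqOn {s : Set ℝ} (hs : s.Infinite) {t : Finset ℕ}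
    {a b : ℕ → ℕ → ℝ}
    (h : ∀ x ∈ s, ∀ y ∈ s, ∑ i ∈ t, ∑ j ∈ t, a i j * legP i x * legP j y
      = ∑ i ∈ t, ∑ j ∈ t, b i j * legP i x * legP j y) :
    ∀ i ∈ t, ∀ j ∈ t, a i j = b i j := by
  have hrow : ∀ y ∈ s, ∀ i ∈ t, ∑ j ∈ t, a i j * legP j y = ∑ j ∈ t, b i j * legP j y := by
    intro y hy
    refine coeff_eq_of_sum_legP_eqOn hs fun x hx => ?_
    simpa only [Finset.sum_mul, mul_right_comm] using h x hx y hy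
  intro i hi
  exact coeff_eq_of_sum_legP_eqOn hs fun y hy => hrow y hy i hi

theorem double_sum_legP_sub_one_sub (t : Finset ℕ) (a : ℕ → ℕ → ℝ) (x y : ℝ) :
    ∑ i ∈ t, ∑ j ∈ t, a i j * legP i x * legP j y
      - ∑ i ∈ t, ∑ j ∈ t, a i j * legP i (1 - x) * legP j (1 - y)
      = ∑ i ∈ t, ∑ j ∈ t, a i j * (1 - (-1) ^ (i + j)) * legP i x * legP j y := by
  simp only [← Finset.sum_sub_distrib, legP_one_sub, pow_add]
  congr! 2
  ring

theorem sub_eq_double_sum_legP {t : Finset ℕ} (h0 : 0 ∈ t) (h1 : 1 ∈ t) (x y : ℝ) :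
    x - y = ∑ i ∈ t, ∑ j ∈ t, ((if i = 1 ∧ j = 0 then xi1 else 0)
      - (if i = 0 ∧ j = 1 then xi1 else 0)) * legP i x * legP j y := by
  simp +contextual only [ite_and, sub_mul, ite_mul, zero_mul, legP_zero, mul_one,
    sum_sub_distrib, sum_ite_irrel, sum_ite_eq', h0, h1, if_true, sum_const_zero]
  rw [xi1_mul_legP_one, xi1_mul_legP_one]
  ring

/-- if `Ā(τ,σ) = Σ_{i=0}^N Σ_{j=0}^N α_{(i,j)} P_i(τ)P_j(σ)` satisfies
`Ā(τ,σ) - Ā(1-τ,1-σ) = τ - σ` on `[0,1]²`, then `α_{(0,1)} = -ξ₁/2`,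
`α_{(1,0)} = ξ₁/2`, and `α_{(i,j)} = 0` whenever `i + j` is odd and `i + j > 1`. -/
theorem symmetry_determines_coefficients (N : ℕ) (α : ℕ → ℕ → ℝ)
    (Abar : ℝ → ℝ → ℝ)
    (hAbar : ∀ τ σ : ℝ, Abar τ σ =
      ∑ i ∈ Finset.range (N + 1), ∑ j ∈ Finset.range (N + 1),
        α i j * legP i τ * legP j σ)
    (hsym : ∀ τ ∈ Set.Icc (0:ℝ) 1, ∀ σ ∈ Set.Icc (0:ℝ) 1,
        Abar τ σ - Abar (1 - τ) (1 - σ) = τ - σ) :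
    α 0 1 = -xi1 / 2 ∧ α 1 0 = xi1 / 2 ∧
      ∀ i j : ℕ, i ≤ N → j ≤ N → Odd (i + j) → 1 < i + j → α i j = 0 := by
  obtain rfl | hN := Nat.eq_zero_or_pos N
  · -- for `N = 0`, `Abar` is constant, so the left side of `hsym` vanishes
    have h := hsym 1 (by norm_num) 0 (by norm_num)
    norm_num [hAbar, legP_zero] at h
  have h0 : 0 ∈ range (N + 1) := by simp
  have h1 : 1 ∈ range (N + 1) := by simpa using hN
  have hcoeff : ∀ i ∈ range (N + 1), ∀ j ∈ range (N + 1), α i j * (1 - (-1) ^ (i + j))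
      = (if i = 1 ∧ j = 0 then xi1 else 0) - (if i = 0 ∧ j = 1 then xi1 else 0) := by
    refine coeff_eq_of_double_sum_legP_eqOn (Set.Icc_infinite zero_lt_one) fun τ hτ σ hσ => ?_
    rw [← double_sum_legP_sub_one_sub, ← hAbar, ← hAbar, hsym τ hτ σ hσ,
      sub_eq_double_sum_legP h0 h1]
  refine ⟨?_, ?_, fun i j hi hj hodd hgt => ?_⟩
  · have h01 := hcoeff 0 h0 1 h1
    norm_num at h01
    linarith
  · have h10 := hcoeff 1 h1 0 h0
    norm_num at h10
    linarith
  · have hij := hcoeff i (by simpa [Nat.lt_succ_iff]) j (by simpa [Nat.lt_succ_iff])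
    rw [hodd.neg_one_pow, if_neg (by omega), if_neg (by omega)] at hij
    linarith

end
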